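/- arXiv:2105.13167 — 4 statements merged into one kernel-verified Lean document; each statement's English description precedes it below -/
import Mathlib

section
/- Let (R,m,k) be an artinian local ring of type 2 and socle degree s. If the k-vector space m^s has rank 1, then there exists an integer v < s such that every nonzero element of the socle of R has valuation v or s. -/
open IsLocalRing

/-- The valuation of an element of an artinian local ring:
`v_R(x) = max { i : x ∈ m^i }` (junk value for `x = 0`). -/
noncomputable def ringValuation (R : Type*) [CommRing R] [IsLocalRing R] (x : R) : ℕ :=
  sSup {i : ℕ | x ∈ maximalIdeal R ^ i}

lemma ringValuation_eq {R : Type*} [CommRing R] [IsLocalRing R] {z : R} {n : ℕ}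
    (h1 : z ∈ maximalIdeal R ^ n) (h2 : z ∉ maximalIdeal R ^ (n + 1)) :
    ringValuation R z = n := by
  have hub : ∀ i ∈ {i : ℕ | z ∈ maximalIdeal R ^ i}, i ≤ n := by
    intro i hi
    by_contra hlt
    push_neg at hlt
    exact h2 (Ideal.pow_le_pow_right hlt hi)
  exact le_antisymm (csSup_le ⟨n, h1⟩ hub) (le_csSup ⟨n, hub⟩ h1)

/-- Existence of the valuation witness for nonzero elements, given `m^(s+1) = 0`. -/
lemma exists_val {R : Type*} [CommRing R] [IsLocalRing R] {s : ℕ}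
    (hs : maximalIdeal R ^ (s + 1) = ⊥) {z : R} (hz : z ≠ 0) :
    ∃ n : ℕ, n ≤ s ∧ z ∈ maximalIdeal R ^ n ∧ z ∉ maximalIdeal R ^ (n + 1) := by
  have h0 : (0 : ℕ) ∈ {i : ℕ | z ∈ maximalIdeal R ^ i} := by
    simp [Set.mem_setOf_eq]
  have hub : ∀ i ∈ {i : ℕ | z ∈ maximalIdeal R ^ i}, i ≤ s := by
    intro i hi
    by_contra hlt
    push_neg at hlt
    have : z ∈ maximalIdeal R ^ (s + 1) := Ideal.pow_le_pow_right hlt hi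
    rw [hs] at this
    exact hz this
  have hbdd : BddAbove {i : ℕ | z ∈ maximalIdeal R ^ i} := ⟨s, hub⟩
  set n := sSup {i : ℕ | z ∈ maximalIdeal R ^ i} with hn
  have hmem : n ∈ {i : ℕ | z ∈ maximalIdeal R ^ i} := Nat.sSup_mem ⟨0, h0⟩ hbdd
  refine ⟨n, hub n hmem, hmem, ?_⟩
  intro hc
  have : n + 1 ≤ n := le_csSup hbdd hc
  omega

/-- Main argument, assuming WLOG that the coefficient `a` in `w = a*x + b*y` is a unit. -/
lemma key {R : Type*} [CommRing R] [IsLocalRing R] {s : ℕ}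
    (hsoc : maximalIdeal R ^ s ≠ ⊥ ∧ maximalIdeal R ^ (s + 1) = ⊥)
    {x y w a b : R} (hw0 : w ≠ 0) (hws : maximalIdeal R ^ s = Ideal.span {w})
    (hspan : (⊥ : Ideal R).colon (maximalIdeal R) = Ideal.span {x, y})
    (hind : ∀ a b : R, a * x + b * y = 0 → a ∈ maximalIdeal R ∧ b ∈ maximalIdeal R)
    (hw2 : a * x + b * y = w) (ha : IsUnit a) :
    ∃ v : ℕ, v < s ∧
      ∀ z ∈ (⊥ : Ideal R).colon (maximalIdeal R), z ≠ 0 →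
        ringValuation R z = v ∨ ringValuation R z = s := by
  obtain ⟨a', ha'⟩ : ∃ a' : R, a' * a = 1 := by
    obtain ⟨u, hu⟩ := ha
    exact ⟨(u⁻¹ : Rˣ), by rw [← hu]; exact u.inv_mul⟩
  have hone : (1 : R) ∉ maximalIdeal R :=
    (Ideal.ne_top_iff_one _).mp (Ideal.IsMaximal.ne_top inferInstance)
  -- socle elements are annihilated by the maximal ideal
  have hann : ∀ z ∈ (⊥ : Ideal R).colon (maximalIdeal R),
      ∀ c ∈ maximalIdeal R, c * z = 0 := by
    intro z hzz c hc
    rw [Submodule.mem_colon] at hzz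
    simpa [smul_eq_mul, mul_comm] using hzz c hc
  -- m^s is contained in the socle
  have hssoc : maximalIdeal R ^ s ≤ (⊥ : Ideal R).colon (maximalIdeal R) := by
    intro u hu
    rw [Submodule.mem_colon]
    intro p hp
    have : u * p ∈ maximalIdeal R ^ (s + 1) := by
      rw [pow_succ]
      exact Ideal.mul_mem_mul hu hp
    rw [hsoc.2] at this
    simpa [smul_eq_mul, mul_comm] using this
  have hwsoc : w ∈ (⊥ : Ideal R).colon (maximalIdeal R) := by
    apply hssoc
    rw [hws]
    exact Ideal.mem_span_singleton_self w
  have hx0 : x ≠ 0 := by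
    intro h
    have := (hind 1 0 (by rw [h]; ring)).1
    exact hone this
  have hy0 : y ≠ 0 := by
    intro h
    have := (hind 0 1 (by rw [h]; ring)).2
    exact hone this
  have hysoc : y ∈ (⊥ : Ideal R).colon (maximalIdeal R) := by
    rw [hspan]
    exact Ideal.subset_span (by simp)
  -- y ∉ m^s
  have hyns : y ∉ maximalIdeal R ^ s := by
    intro hy
    rw [hws, Ideal.mem_span_singleton] at hy
    obtain ⟨c, hc⟩ := hy
    -- y = w * c ; then a*x = (1 - b*c)*w  and 1 - b*c ∈ m kills w
    have h1 : (c * a) * x + (c * b - 1) * y = 0 := by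
      linear_combination c * hw2 - hc
    have h2 := hind _ _ h1
    have hm : (1 - b * c) ∈ maximalIdeal R := by
      have h3 : -(c * b - 1) ∈ maximalIdeal R := neg_mem h2.2
      have h4 : (1 - b * c) = -(c * b - 1) := by ring
      rw [h4]; exact h3
    have hz : (1 - b * c) * w = 0 := hann w hwsoc _ hm
    have hax : a * x = 0 := by
      have h5 : a * x = (1 - b * c) * w := by
        linear_combination hw2 - b * hc
      rw [h5, hz]
    have : x = 0 := by
      have := congrArg (a' * ·) hax
      simpa [← mul_assoc, ha'] using this
    exact hx0 this
  -- the valuation of y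
  obtain ⟨v, hvs, hyv, hyv1⟩ := exists_val hsoc.2 hy0
  have hvlt : v < s := by
    rcases lt_or_eq_of_le hvs with h | h
    · exact h
    · exact absurd (h ▸ hyv) hyns
  refine ⟨v, hvlt, ?_⟩
  intro z hzsoc hz0
  -- write z = α * w + β * y
  obtain ⟨p, q, hpq⟩ := Ideal.mem_span_pair.mp (hspan ▸ hzsoc)
  have hxeq : x = a' * w - a' * b * y := by
    linear_combination a' * hw2 - x * ha'
  have hzeq : z = (p * a') * w + (q - p * a' * b) * y := by
    linear_combination (-1 : R) * hpq + p * hxeq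
  set α := p * a'
  set β := q - p * a' * b
  by_cases hβ : IsUnit β
  · -- valuation v
    left
    obtain ⟨β', hβ'⟩ : ∃ β' : R, β' * β = 1 := by
      obtain ⟨u, hu⟩ := hβ
      exact ⟨(u⁻¹ : Rˣ), by rw [← hu]; exact u.inv_mul⟩
    have hwm : w ∈ maximalIdeal R ^ v := by
      have : maximalIdeal R ^ s ≤ maximalIdeal R ^ v := Ideal.pow_le_pow_right (le_of_lt hvlt)
      apply this
      rw [hws]; exact Ideal.mem_span_singleton_self w
    have hzv : z ∈ maximalIdeal R ^ v := by
      rw [hzeq]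
      exact Ideal.add_mem _ (Ideal.mul_mem_left _ _ hwm) (Ideal.mul_mem_left _ _ hyv)
    have hzv1 : z ∉ maximalIdeal R ^ (v + 1) := by
      intro hc
      have hwm1 : w ∈ maximalIdeal R ^ (v + 1) := by
        have : maximalIdeal R ^ s ≤ maximalIdeal R ^ (v + 1) := Ideal.pow_le_pow_right hvlt
        apply this
        rw [hws]; exact Ideal.mem_span_singleton_self w
      have hby : β * y ∈ maximalIdeal R ^ (v + 1) := by
        have : β * y = z - α * w := by rw [hzeq]; ring
        rw [this]
        exact Ideal.sub_mem _ hc (Ideal.mul_mem_left _ _ hwm1)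
      have : y ∈ maximalIdeal R ^ (v + 1) := by
        have h := Ideal.mul_mem_left _ β' hby
        rw [← mul_assoc, hβ', one_mul] at h
        exact h
      exact hyv1 this
    exact ringValuation_eq hzv hzv1
  · -- β ∈ m, so z = α * w ∈ m^s, valuation s
    right
    have hβm : β ∈ maximalIdeal R := (IsLocalRing.mem_maximalIdeal β).mpr hβ
    have hby : β * y = 0 := hann y hysoc β hβm
    have hzw : z = α * w := by rw [hzeq, hby]; ring
    have hzs : z ∈ maximalIdeal R ^ s := by
      rw [hzw, hws]
      exact Ideal.mul_mem_left _ _ (Ideal.mem_span_singleton_self w)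
    have hzs1 : z ∉ maximalIdeal R ^ (s + 1) := by
      rw [hsoc.2]
      simpa using hz0
    exact ringValuation_eq hzs hzs1

/-- Let `(R,m,k)` be an artinian local ring of type 2 and socle
degree `s`. If the `k`-vector space `m^s` has rank 1, then there exists `v < s`
such that every nonzero element of the socle of `R` has valuation `v` or `s`. -/
theorem stmt0 (R : Type*) [CommRing R] [IsLocalRing R] [IsArtinianRing R] (s : ℕ)
    -- `s` is the socle degree of `R`
    (hsoc : maximalIdeal R ^ s ≠ ⊥ ∧ maximalIdeal R ^ (s + 1) = ⊥)
    -- `R` has type 2: the socle `(0 : m)` is spanned by two elements that are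
    -- linearly independent over the residue field
    (htype : ∃ x y : R,
      (⊥ : Ideal R).colon (maximalIdeal R) = Ideal.span {x, y} ∧
      ∀ a b : R, a * x + b * y = 0 → a ∈ maximalIdeal R ∧ b ∈ maximalIdeal R)
    -- the `k`-vector space `m^s` has rank 1
    (hrk : ∃ x : R, x ≠ 0 ∧ maximalIdeal R ^ s = Ideal.span {x}) :
    ∃ v : ℕ, v < s ∧
      ∀ z ∈ (⊥ : Ideal R).colon (maximalIdeal R), z ≠ 0 →
        ringValuation R z = v ∨ ringValuation R z = s := by
  obtain ⟨x, y, hspan, hind⟩ := htype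
  obtain ⟨w, hw0, hws⟩ := hrk
  -- w ∈ socle = span {x, y}
  have hann : ∀ z ∈ (⊥ : Ideal R).colon (maximalIdeal R),
      ∀ c ∈ maximalIdeal R, c * z = 0 := by
    intro z hzz c hc
    rw [Submodule.mem_colon] at hzz
    simpa [smul_eq_mul, mul_comm] using hzz c hc
  have hssoc : maximalIdeal R ^ s ≤ (⊥ : Ideal R).colon (maximalIdeal R) := by
    intro u hu
    rw [Submodule.mem_colon]
    intro p hp
    have : u * p ∈ maximalIdeal R ^ (s + 1) := by
      rw [pow_succ]
      exact Ideal.mul_mem_mul hu hp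
    rw [hsoc.2] at this
    simpa [smul_eq_mul, mul_comm] using this
  have hxsoc : x ∈ (⊥ : Ideal R).colon (maximalIdeal R) := by
    rw [hspan]; exact Ideal.subset_span (by simp)
  have hysoc : y ∈ (⊥ : Ideal R).colon (maximalIdeal R) := by
    rw [hspan]; exact Ideal.subset_span (by simp)
  have hwsoc : w ∈ Ideal.span {x, y} := by
    rw [← hspan]
    apply hssoc
    rw [hws]
    exact Ideal.mem_span_singleton_self w
  obtain ⟨a, b, hw2⟩ := Ideal.mem_span_pair.mp hwsoc
  by_cases ha : IsUnit a
  · exact key hsoc hw0 hws hspan hind hw2 ha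
  · have hb : IsUnit b := by
      by_contra hb
      have ham : a ∈ maximalIdeal R := (IsLocalRing.mem_maximalIdeal a).mpr ha
      have hbm : b ∈ maximalIdeal R := (IsLocalRing.mem_maximalIdeal b).mpr hb
      have h1 : a * x = 0 := hann x hxsoc a ham
      have h2 : b * y = 0 := hann y hysoc b hbm
      rw [h1, h2, zero_add] at hw2
      exact hw0 hw2.symm
    have hspan' : (⊥ : Ideal R).colon (maximalIdeal R) = Ideal.span {y, x} := by
      rw [hspan, Set.pair_comm]
    have hind' : ∀ a b : R, a * y + b * x = 0 → a ∈ maximalIdeal R ∧ b ∈ maximalIdeal R := by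
      intro a b h
      have := hind b a (by linear_combination h)
      exact ⟨this.2, this.1⟩
    have hw2' : b * y + a * x = w := by linear_combination hw2
    exact key hsoc hw0 hws hspan' hind' hw2' hb
end

section
/- Let (Q,q,k) be a regular local ring, I1, I2 ⊆ q^2 q-primary ideals, I = I1 ∩ I2, and b = min{ i ≥ 1 : q^{i+1} ∩ I2 ⊆ I1 }. For every y ∈ (q^b ∩ I2) \ I1, the coset y + I is a socle element of R = Q/I of valuation exactly b. -/
/-! Since `q^(b+1) ∩ I2 ⊆ I1`, multiplying `y ∈ q^b ∩ I2` by `q` lands in `I1 ∩ I2`. Conversely,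
if `y ∈ q^(b+1) + I1 ∩ I2`, say `y = x + w`, then `x = y - w ∈ q^(b+1) ∩ I2 ⊆ I1`, forcing
`y ∈ I1`; so `b` is the largest `i` with `y ∈ q^i + I`. The minimum defining `b` exists because
`q^n ⊆ I1` for some `n`, as `I1` has radical `q` in a Noetherian ring. -/

open IsLocalRing

/-- A Noetherian local ring is regular if its maximal ideal is generated by a
regular sequence. -/
def IsRegularLocal (Q : Type*) [CommRing Q] [IsLocalRing Q] : Prop :=
  ∃ L : List Q, RingTheory.Sequence.IsRegular Q L ∧
    Ideal.span {x | x ∈ L} = maximalIdeal Q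

namespace Ideal

variable {R : Type*} [CommRing R] {m J K : Ideal R} {b : ℕ} {y : R}

theorem sInf_mem_pow_succ_inf_le {n : ℕ} (hn : m ^ n ≤ J) :
    m ^ (sInf {i : ℕ | 1 ≤ i ∧ m ^ (i + 1) ⊓ K ≤ J} + 1) ⊓ K ≤ J := by
  have hne : {i : ℕ | 1 ≤ i ∧ m ^ (i + 1) ⊓ K ≤ J}.Nonempty :=
    ⟨max n 1, le_max_right _ _, inf_le_left.trans ((pow_le_pow_right (by omega)).trans hn)⟩
  exact (Nat.sInf_mem hne).2

theorem mul_mem_inf_of_pow_succ_inf_le (h : m ^ (b + 1) ⊓ K ≤ J) (hy : y ∈ m ^ b ⊓ K)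
    {z : R} (hz : z ∈ m) : z * y ∈ J ⊓ K := by
  have hzK : z * y ∈ K := K.mul_mem_left z hy.2
  have hzm : z * y ∈ m ^ (b + 1) := by
    rw [pow_succ']
    exact mul_mem_mul hz hy.1
  exact ⟨h ⟨hzm, hzK⟩, hzK⟩

theorem le_of_mem_pow_sup_inf (h : m ^ (b + 1) ⊓ K ≤ J) (hyK : y ∈ K) (hyJ : y ∉ J) {i : ℕ}
    (hi : y ∈ m ^ i ⊔ (J ⊓ K)) : i ≤ b := by
  by_contra! hbi
  have hle : m ^ i ⊔ (J ⊓ K) ≤ m ^ (b + 1) ⊔ (J ⊓ K) := sup_le_sup_right (pow_le_pow_right hbi) _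
  obtain ⟨x, hx, w, hw, rfl⟩ := Submodule.mem_sup.mp (hle hi)
  have hxK : x ∈ K := by simpa using K.sub_mem hyK hw.2
  exact hyJ (J.add_mem (h ⟨hx, hxK⟩) hw.1)

theorem isGreatest_pow_sup_inf (h : m ^ (b + 1) ⊓ K ≤ J) (hy : y ∈ m ^ b ⊓ K) (hyJ : y ∉ J) :
    IsGreatest {i : ℕ | y ∈ m ^ i ⊔ (J ⊓ K)} b :=
  ⟨Submodule.mem_sup_left hy.1, fun _ hi => le_of_mem_pow_sup_inf h hy.2 hyJ hi⟩

end Ideal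

-- The socle and valuation conditions on `y + I` in `Q/I` are expressed in `Q`:
-- `m·(y+I) = 0` means `q y ⊆ I`, and `y + I ∈ m^i` means `y ∈ q^i + I`.
theorem stmt2_general (Q : Type*) [CommRing Q] [IsLocalRing Q] [IsNoetherianRing Q]
    (I1 I2 : Ideal Q)
    (h1r : I1.radical = maximalIdeal Q)
    (b : ℕ)
    (hb : b = sInf {i : ℕ | 1 ≤ i ∧ maximalIdeal Q ^ (i + 1) ⊓ I2 ≤ I1}) :
    ∀ y : Q, y ∈ maximalIdeal Q ^ b ⊓ I2 → y ∉ I1 →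
      (∀ z ∈ maximalIdeal Q, z * y ∈ I1 ⊓ I2) ∧
      sSup {i : ℕ | y ∈ maximalIdeal Q ^ i ⊔ (I1 ⊓ I2)} = b := by
  intro y hy hyI1
  obtain ⟨n, hn⟩ :=
    Ideal.exists_pow_le_of_le_radical_of_fg h1r.ge (IsNoetherian.noetherian (maximalIdeal Q))
  have hbI1 : maximalIdeal Q ^ (b + 1) ⊓ I2 ≤ I1 := hb ▸ Ideal.sInf_mem_pow_succ_inf_le hn
  exact ⟨fun _ hz => Ideal.mul_mem_inf_of_pow_succ_inf_le hbI1 hy hz,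
    (Ideal.isGreatest_pow_sup_inf hbI1 hy hyI1).csSup_eq⟩

/-- Let `(Q,q,k)` be regular local, `I1, I2 ⊆ q^2` `q`-primary
ideals, `I = I1 ∩ I2`, and `b = min { i ≥ 1 : q^{i+1} ∩ I2 ⊆ I1 }`. For every
`y ∈ (q^b ∩ I2) \ I1`, the coset `y + I` is a socle element of `R = Q/I` of
valuation exactly `b`.  (The socle and valuation conditions are expressed in
`Q`: `m·(y+I) = 0` means `q y ⊆ I`, and `y + I ∈ m^i` means `y ∈ q^i + I`.) -/
theorem stmt2 (Q : Type*) [CommRing Q] [IsLocalRing Q] [IsNoetherianRing Q]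
    (hreg : IsRegularLocal Q)
    (I1 I2 : Ideal Q)
    (h1p : I1.IsPrimary) (h1r : I1.radical = maximalIdeal Q)
    (h2p : I2.IsPrimary) (h2r : I2.radical = maximalIdeal Q)
    (h1q2 : I1 ≤ maximalIdeal Q ^ 2) (h2q2 : I2 ≤ maximalIdeal Q ^ 2)
    (b : ℕ)
    (hb : b = sInf {i : ℕ | 1 ≤ i ∧ maximalIdeal Q ^ (i + 1) ⊓ I2 ≤ I1}) :
    ∀ y : Q, y ∈ maximalIdeal Q ^ b ⊓ I2 → y ∉ I1 →
      (∀ z ∈ maximalIdeal Q, z * y ∈ I1 ⊓ I2) ∧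
      sSup {i : ℕ | y ∈ maximalIdeal Q ^ i ⊔ (I1 ⊓ I2)} = b :=
  stmt2_general Q I1 I2 h1r b hb
end

section
/- Let (Q,q,k) be a regular local ring and I1, I2 ⊆ q^2 be q-primary irreducible (Gorenstein) ideals with quotients R1 = Q/I1, R2 = Q/I2 Gorenstein. Set R = Q/(I1 ∩ I2). Then R has type 2 if and only if I2 ⊄ I1 and I1 ⊄ I2. -/
/-!
If `Q/I₂` is Gorenstein and artinian, every nonzero ideal of `Q/I₂` meets its one-dimensional
socle, so it contains the socle. Hence when `I₁ ⊄ I₂` the socle of `Q/I₂` is generated by an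
element `y₂ ∈ I₁`, and symmetrically the socle of `Q/I₁` by some `y₁ ∈ I₂`. Since the socle of
`Q/(I₁ ∩ I₂)` is the intersection of the two socles, the modular law shows that it is generated
by `y₁, y₂`, which are independent because `y₁` vanishes modulo `I₂` but not modulo `I₁`, and
vice versa. Conversely, if `I₁ ⊆ I₂` (or `I₂ ⊆ I₁`) then `Q/(I₁ ∩ I₂)` is one of the
Gorenstein quotients, which have type one.
-/

open IsLocalRing

/-- `Q/J` has type 1 (is artinian Gorenstein): the socle `(J : q)/J` is spanned
over the residue field by one nonzero element. -/
def HasTypeOne {Q : Type*} [CommRing Q] [IsLocalRing Q] (J : Ideal Q) : Prop :=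
  ∃ x : Q, x ∉ J ∧ J.colon (maximalIdeal Q) = J ⊔ Ideal.span {x}

/-- `Q/J` has type 2: the socle `(J : q)/J` is spanned by two elements whose
cosets are linearly independent over the residue field. -/
def HasTypeTwo {Q : Type*} [CommRing Q] [IsLocalRing Q] (J : Ideal Q) : Prop :=
  ∃ x y : Q, J.colon (maximalIdeal Q) = J ⊔ Ideal.span {x, y} ∧
    ∀ a b : Q, a * x + b * y ∈ J → a ∈ maximalIdeal Q ∧ b ∈ maximalIdeal Q

theorem Ideal.exists_mem_colon_notMem_of_mul_pow_le {R : Type*} [CommRing R] {I J K : Ideal R}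
    (n : ℕ) (hn : K * I ^ n ≤ J) (hK : ¬K ≤ J) :
    ∃ v ∈ K, v ∉ J ∧ v ∈ J.colon (I : Set R) := by
  induction n generalizing K with
  | zero =>
    rw [pow_zero, mul_one] at hn
    exact absurd hn hK
  | succ n ih =>
    by_cases hKI : K * I ≤ J
    · obtain ⟨v, hvK, hvJ⟩ := SetLike.not_le_iff_exists.mp hK
      exact ⟨v, hvK, hvJ, Submodule.mem_colon.mpr fun s hs ↦ hKI (mul_mem_mul hvK hs)⟩
    · obtain ⟨v, hv, hvJ, hvc⟩ := ih (K := K * I) (by rwa [mul_assoc, ← pow_succ']) hKI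
      exact ⟨v, mul_le_left hv, hvJ, hvc⟩

section IsLocalRing

variable {Q : Type*} [CommRing Q] [IsLocalRing Q]

open Ideal

theorem mem_maximalIdeal_of_mul_mem {J : Ideal Q} {a y : Q} (hy : y ∉ J) (h : a * y ∈ J) :
    a ∈ maximalIdeal Q := by
  by_contra ha
  exact hy ((J.unit_mul_mem_iff_mem (notMem_maximalIdeal.mp ha)).mp h)

theorem mul_mem_of_mem_colon_maximalIdeal {J : Ideal Q} {a x : Q}
    (hx : x ∈ J.colon (maximalIdeal Q : Set Q)) (ha : a ∈ maximalIdeal Q) : a * x ∈ J := by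
  simpa [mul_comm] using Submodule.mem_colon.mp hx a ha

theorem colon_maximalIdeal_eq_sup_span_of_mem {J : Ideal Q} {x v : Q}
    (hc : J.colon (maximalIdeal Q : Set Q) = J ⊔ span {x})
    (hv : v ∈ J.colon (maximalIdeal Q : Set Q)) (hvJ : v ∉ J) :
    J.colon (maximalIdeal Q : Set Q) = J ⊔ span {v} := by
  have hxc : x ∈ J.colon (maximalIdeal Q : Set Q) :=
    hc ▸ mem_sup_right (mem_span_singleton_self x)
  rw [hc, Submodule.mem_sup] at hv
  obtain ⟨j, hj, w, hw, rfl⟩ := hv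
  obtain ⟨c, rfl⟩ := mem_span_singleton'.mp hw
  have hcu : IsUnit c := notMem_maximalIdeal.mp fun hcm ↦
    hvJ (add_mem hj (mul_mem_of_mem_colon_maximalIdeal hxc hcm))
  have hx : x ∈ J ⊔ span {j + c * x} := by
    rw [← (J ⊔ span {j + c * x}).unit_mul_mem_iff_mem hcu]
    have := sub_mem (mem_sup_right (mem_span_singleton_self (j + c * x)))
      (mem_sup_left hj : j ∈ J ⊔ span {j + c * x})
    rwa [add_sub_cancel_left] at this
  rw [hc]
  refine le_antisymm (sup_le le_sup_left ((span_singleton_le_iff_mem _).mpr hx))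
    (sup_le le_sup_left ((span_singleton_le_iff_mem _).mpr ?_))
  exact add_mem (mem_sup_left hj) (mem_sup_right (mul_mem_left _ c (mem_span_singleton_self x)))

theorem HasTypeOne.exists_colon_eq_sup_span_of_not_le [IsNoetherianRing Q] {I J : Ideal Q}
    (hJ : HasTypeOne J) (hrad : J.radical = maximalIdeal Q) (hI : ¬I ≤ J) :
    ∃ y ∈ I, y ∉ J ∧ J.colon (maximalIdeal Q : Set Q) = J ⊔ span {y} := by
  obtain ⟨x, -, hc⟩ := hJ
  obtain ⟨n, hn⟩ := J.exists_radical_pow_le_of_fg (IsNoetherian.noetherian _)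
  rw [hrad] at hn
  obtain ⟨v, hvI, hvJ, hvc⟩ :=
    exists_mem_colon_notMem_of_mul_pow_le n (mul_le_right.trans hn) hI
  exact ⟨v, hvI, hvJ, colon_maximalIdeal_eq_sup_span_of_mem hc hvc hvJ⟩

theorem HasTypeOne.not_hasTypeTwo {J : Ideal Q} (h1 : HasTypeOne J) : ¬HasTypeTwo J := by
  rintro ⟨x, y, hc, hind⟩
  obtain ⟨x₀, hx₀, hc₀⟩ := h1
  have hx₀c : x₀ ∈ J.colon (maximalIdeal Q : Set Q) :=
    hc₀ ▸ mem_sup_right (mem_span_singleton_self x₀)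
  have hmul : ∀ z ∈ J.colon (maximalIdeal Q : Set Q), ∃ c, z - c * x₀ ∈ J := by
    intro z hz
    rw [hc₀, Submodule.mem_sup] at hz
    obtain ⟨j, hj, w, hw, rfl⟩ := hz
    obtain ⟨c, rfl⟩ := mem_span_singleton'.mp hw
    exact ⟨c, by simpa using hj⟩
  obtain ⟨a, ha⟩ := hmul x (hc ▸ mem_sup_right (subset_span (by simp)))
  obtain ⟨b, hb⟩ := hmul y (hc ▸ mem_sup_right (subset_span (by simp)))
  have hdep : b * x + -a * y ∈ J := by
    convert sub_mem (J.mul_mem_left b ha) (J.mul_mem_left a hb) using 1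
    ring
  obtain ⟨hbm, ham⟩ := hind b (-a) hdep
  have hxJ : x ∈ J := by
    simpa using add_mem ha (mul_mem_of_mem_colon_maximalIdeal hx₀c (neg_mem_iff.mp ham))
  have hyJ : y ∈ J := by
    simpa using add_mem hb (mul_mem_of_mem_colon_maximalIdeal hx₀c hbm)
  have hle : J.colon (maximalIdeal Q : Set Q) ≤ J :=
    hc ▸ sup_le le_rfl (span_le.mpr (by simp [Set.insert_subset_iff, hxJ, hyJ]))
  exact hx₀ (hle hx₀c)

theorem hasTypeTwo_inf {I₁ I₂ : Ideal Q} {y₁ y₂ : Q} (hy₁ : y₁ ∈ I₂) (hy₂ : y₂ ∈ I₁)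
    (hy₁' : y₁ ∉ I₁) (hy₂' : y₂ ∉ I₂)
    (hc₁ : I₁.colon (maximalIdeal Q : Set Q) = I₁ ⊔ span {y₁})
    (hc₂ : I₂.colon (maximalIdeal Q : Set Q) = I₂ ⊔ span {y₂}) :
    HasTypeTwo (I₁ ⊓ I₂) := by
  refine ⟨y₁, y₂, ?_, fun a b hab ↦ ⟨?_, ?_⟩⟩
  · have h₁ : span {y₁} ≤ I₂ := (span_singleton_le_iff_mem _).mpr hy₁
    have h₂ : span {y₂} ≤ I₁ ⊔ span {y₁} :=
      le_sup_of_le_left ((span_singleton_le_iff_mem _).mpr hy₂)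
    rw [Submodule.inf_colon, hc₁, hc₂, sup_comm I₂, inf_comm, sup_inf_assoc_of_le _ h₂,
      ← inf_sup_assoc_of_le _ h₁, span_insert]
    ac_rfl
  · exact mem_maximalIdeal_of_mul_mem hy₁'
      (by simpa using sub_mem hab.1 (I₁.mul_mem_left b hy₂))
  · exact mem_maximalIdeal_of_mul_mem hy₂'
      (by simpa using sub_mem hab.2 (I₂.mul_mem_left a hy₁))

end IsLocalRing

theorem stmt3_general (Q : Type*) [CommRing Q] [IsLocalRing Q] [IsNoetherianRing Q]
    (I1 I2 : Ideal Q)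
    (h1r : I1.radical = maximalIdeal Q)
    (h2r : I2.radical = maximalIdeal Q)
    (h1gor : HasTypeOne I1) (h2gor : HasTypeOne I2) :
    HasTypeTwo (I1 ⊓ I2) ↔ (¬ I2 ≤ I1 ∧ ¬ I1 ≤ I2) := by
  refine ⟨fun h ↦ ⟨fun h21 ↦ ?_, fun h12 ↦ ?_⟩, fun ⟨h21, h12⟩ ↦ ?_⟩
  · exact h2gor.not_hasTypeTwo (inf_eq_right.mpr h21 ▸ h)
  · exact h1gor.not_hasTypeTwo (inf_eq_left.mpr h12 ▸ h)
  · obtain ⟨y1, hy1, hy1', hc1⟩ := h1gor.exists_colon_eq_sup_span_of_not_le h1r h21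
    obtain ⟨y2, hy2, hy2', hc2⟩ := h2gor.exists_colon_eq_sup_span_of_not_le h2r h12
    exact hasTypeTwo_inf hy1 hy2 hy1' hy2' hc1 hc2

/-- Let `(Q,q,k)` be regular local and `I1, I2 ⊆ q^2` be
`q`-primary irreducible (Gorenstein) ideals, so that `Q/I1` and `Q/I2` are
Gorenstein. Then `R = Q/(I1 ∩ I2)` has type 2 iff `I2 ⊄ I1` and `I1 ⊄ I2`. -/
theorem stmt3 (Q : Type*) [CommRing Q] [IsLocalRing Q] [IsNoetherianRing Q]
    (hreg : IsRegularLocal Q)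
    (I1 I2 : Ideal Q)
    (h1p : I1.IsPrimary) (h1r : I1.radical = maximalIdeal Q)
    (h2p : I2.IsPrimary) (h2r : I2.radical = maximalIdeal Q)
    (h1q2 : I1 ≤ maximalIdeal Q ^ 2) (h2q2 : I2 ≤ maximalIdeal Q ^ 2)
    (h1gor : HasTypeOne I1) (h2gor : HasTypeOne I2) :
    HasTypeTwo (I1 ⊓ I2) ↔ (¬ I2 ≤ I1 ∧ ¬ I1 ≤ I2) :=
  stmt3_general Q I1 I2 h1r h2r h1gor h2gor
end

section
/- Let (Q,q,k) be a regular local ring of embedding dimension e ≥ 3 and J ⊆ q^2 a homogeneous q-primary complete intersection ideal. If the ring Q/J is compressed (Gorenstein), then e = 3 and the h-vector of Q/J is (1,3,3,1). -/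
open MvPolynomial

/-- The ideal generated by the variables (the graded maximal ideal `q`). -/
noncomputable def qIdeal (k : Type*) [Field k] (e : ℕ) : Ideal (MvPolynomial (Fin e) k) :=
  Ideal.span (Set.range X)

/-- The Hilbert function of `Q/J`: `h(i) = dim_k (q^i + J)/(q^{i+1} + J)`. -/
noncomputable def hilb (k : Type*) [Field k] (e : ℕ)
    (J : Ideal (MvPolynomial (Fin e) k)) (i : ℕ) : ℕ :=
  Module.finrank k
    (((qIdeal k e ^ i ⊔ J).map (Ideal.Quotient.mk (qIdeal k e ^ (i + 1) ⊔ J))).restrictScalars k)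

/-- An ideal is homogeneous if it is generated by homogeneous polynomials. -/
def IsHomogeneousIdeal (k : Type*) [Field k] (e : ℕ)
    (J : Ideal (MvPolynomial (Fin e) k)) : Prop :=
  ∃ S : Set (MvPolynomial (Fin e) k),
    (∀ p ∈ S, ∃ n, MvPolynomial.IsHomogeneous p n) ∧ J = Ideal.span S

/-- Hilbert function of the ambient ring: `h_Q(i) = binom(e−1+i, e−1)`. -/
def hQ (e i : ℕ) : ℕ := Nat.choose (e - 1 + i) (e - 1)

/-!
Compressedness gives `h(d) = dim Q_d` for `d ≤ s/2`, so `J` contains no nonzero form of degree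
`< t := s/2 + 1`, i.e. `J ⊆ q^t`. Then the degree `t` part of `J` is spanned by the degree `t`
components of the `e` generators, so `dim Q_t - h(t) ≤ e`. As
`h(t) = dim Q_{s-t} ≤ dim Q_{t-1}`, this bounds `dim Q_t - dim Q_{t-1} = binom(e - 2 + t, e - 2)`
by `e`, which forces `e = 3` and `t = 2`; the same count rules out `s = 2`, and `J ⊆ q^2` rules
out `s ≤ 1`.
-/

attribute [local instance] MvPolynomial.gradedAlgebra

namespace MvPolynomial

section PowIdealOfVars

variable {σ R : Type*} [CommRing R] {p : MvPolynomial σ R} {i : ℕ}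

lemma homogeneousComponent_eq_zero_of_mem_pow_idealOfVars (hp : p ∈ idealOfVars σ R ^ i)
    {d : ℕ} (hd : d < i) : homogeneousComponent d p = 0 := by
  ext m
  rw [coeff_homogeneousComponent, coeff_zero]
  split_ifs with hm
  · exact (mem_pow_idealOfVars_iff' i p).1 hp m (hm ▸ hd)
  · rfl

lemma IsHomogeneous.mem_pow_idealOfVars (hp : p.IsHomogeneous i) : p ∈ idealOfVars σ R ^ i := by
  rw [mem_pow_idealOfVars_iff]
  intro m hm
  rw [Finsupp.degree_eq_weight_one]
  exact (hp (mem_support_iff.1 hm)).ge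

lemma sub_homogeneousComponent_mem_pow_idealOfVars_succ (hp : p ∈ idealOfVars σ R ^ i) :
    p - homogeneousComponent i p ∈ idealOfVars σ R ^ (i + 1) := by
  rw [mem_pow_idealOfVars_iff']
  intro m hm
  rw [coeff_sub, coeff_homogeneousComponent]
  rcases (Nat.lt_succ_iff.1 hm).lt_or_eq with hlt | heq
  · rw [if_neg hlt.ne, (mem_pow_idealOfVars_iff' i p).1 hp m hlt, sub_zero]
  · rw [if_pos heq, sub_self]

lemma sub_C_coeff_zero_mem_idealOfVars (p : MvPolynomial σ R) :
    p - C (coeff 0 p) ∈ idealOfVars σ R := by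
  rw [← pow_one (idealOfVars σ R), mem_pow_idealOfVars_iff']
  intro m hm
  rw [Nat.lt_one_iff, Finsupp.degree_eq_zero_iff] at hm
  simp [hm]

lemma homogeneousComponent_mul_of_mem_pow_idealOfVars (r : MvPolynomial σ R)
    (hp : p ∈ idealOfVars σ R ^ i) :
    homogeneousComponent i (r * p) = C (coeff 0 r) * homogeneousComponent i p := by
  classical
  have hrest : (r - C (coeff 0 r)) * p ∈ idealOfVars σ R ^ (i + 1) := by
    rw [pow_succ']
    exact Ideal.mul_mem_mul (sub_C_coeff_zero_mem_idealOfVars r) hp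
  rw [← sub_add_cancel r (C (coeff 0 r)), add_mul, map_add,
    homogeneousComponent_eq_zero_of_mem_pow_idealOfVars hrest i.lt_succ_self, zero_add,
    homogeneousComponent_C_mul, coeff_add, coeff_sub, coeff_C, if_pos rfl]
  simp

end PowIdealOfVars

instance {σ R : Type*} [Finite σ] [CommSemiring R] (n : ℕ) :
    Module.Finite R (homogeneousSubmodule σ R n) :=
  Module.Finite.iff_fg.2 (homogeneousSubmodule_fg σ R n)

lemma finrank_homogeneousSubmodule (σ K : Type*) [Fintype σ] [Field K] (n : ℕ) :
    Module.finrank K (homogeneousSubmodule σ K n) = (Fintype.card σ + n - 1).choose n := by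
  classical
  have hdeg : {d : σ →₀ ℕ | d.degree = n} =
      ((Finset.univ.finsuppAntidiag n : Finset (σ →₀ ℕ)) : Set (σ →₀ ℕ)) := by
    ext d
    simp [Finsupp.degree_eq_sum]
  rw [homogeneousSubmodule_eq_finsupp_supported, hdeg]
  refine (Module.finrank_eq_card_basis (basisRestrictSupport K _)).trans ?_
  simp [Finset.card_finsuppAntidiag_nat_eq_choose]

section HomogeneousPart

variable {σ K : Type*} [Field K]

noncomputable def homogeneousPart (J : Ideal (MvPolynomial σ K)) (i : ℕ) :
    Submodule K (MvPolynomial σ K) :=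
  J.restrictScalars K ⊓ homogeneousSubmodule σ K i

variable {J : Ideal (MvPolynomial σ K)}

lemma homogeneousPart_eq_bot_of_le_pow {t d : ℕ} (hJ : J ≤ idealOfVars σ K ^ t) (hd : d < t) :
    homogeneousPart J d = ⊥ := by
  rw [eq_bot_iff]
  rintro p ⟨hpJ, hp⟩
  rw [Submodule.mem_bot, ← homogeneousComponent_eq_self hp]
  exact homogeneousComponent_eq_zero_of_mem_pow_idealOfVars (hJ hpJ) hd

lemma le_pow_idealOfVars_iff (hJ : J.IsHomogeneous (homogeneousSubmodule σ K)) {t : ℕ} :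
    J ≤ idealOfVars σ K ^ t ↔ ∀ d < t, homogeneousPart J d = ⊥ := by
  refine ⟨fun h d hd => homogeneousPart_eq_bot_of_le_pow h hd, fun h p hp => ?_⟩
  rw [mem_pow_idealOfVars_iff']
  intro m hm
  have hcomp : homogeneousComponent m.degree p ∈ homogeneousPart J m.degree :=
    ⟨homogeneousComponent_mem_of_mem hJ hp _, homogeneousComponent_mem _ _⟩
  rw [h _ hm, Submodule.mem_bot] at hcomp
  simpa [coeff_homogeneousComponent] using congr_arg (coeff m) hcomp

lemma homogeneousPart_le_span_homogeneousComponent {S : Set (MvPolynomial σ K)} {t : ℕ}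
    (hJS : J = Ideal.span S) (hJ : J ≤ idealOfVars σ K ^ t) :
    homogeneousPart J t ≤ Submodule.span K (homogeneousComponent t '' S) := by
  rintro p ⟨hpJ, hp⟩
  rw [← homogeneousComponent_eq_self hp]
  clear hp
  subst hJS
  induction hpJ using Submodule.span_induction with
  | mem x hx => exact Submodule.subset_span ⟨x, hx, rfl⟩
  | zero => simp
  | add x y _ _ hx hy => exact map_add (homogeneousComponent t) x y ▸ add_mem hx hy
  | smul a x hxJ hx =>
    rw [smul_eq_mul, homogeneousComponent_mul_of_mem_pow_idealOfVars a (hJ hxJ), C_mul']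
    exact Submodule.smul_mem _ _ hx

lemma finrank_homogeneousPart_le_card {s : Finset (MvPolynomial σ K)} {t : ℕ}
    (hJS : J = Ideal.span s) (hJ : J ≤ idealOfVars σ K ^ t) :
    Module.finrank K (homogeneousPart J t) ≤ s.card := by
  classical
  calc Module.finrank K (homogeneousPart J t)
      ≤ Module.finrank K (Submodule.span K ((s.image (homogeneousComponent t) : Finset _) :
          Set (MvPolynomial σ K))) :=
        Submodule.finrank_mono <| by
          simpa using homogeneousPart_le_span_homogeneousComponent hJS hJ
    _ ≤ (s.image (homogeneousComponent t)).card := finrank_span_finset_le_card _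
    _ ≤ s.card := Finset.card_image_le

end HomogeneousPart

section GradedPiece

variable {σ K : Type*} [Field K] (J : Ideal (MvPolynomial σ K)) (i : ℕ)

noncomputable def toGradedPiece :
    homogeneousSubmodule σ K i →ₗ[K]
      MvPolynomial σ K ⧸ (idealOfVars σ K ^ (i + 1) ⊔ J) :=
  (Ideal.Quotient.mkₐ K _).toLinearMap ∘ₗ (homogeneousSubmodule σ K i).subtype

lemma range_toGradedPiece :
    LinearMap.range (toGradedPiece J i) =
      ((idealOfVars σ K ^ i ⊔ J).map
        (Ideal.Quotient.mk (idealOfVars σ K ^ (i + 1) ⊔ J))).restrictScalars K := by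
  apply le_antisymm
  · rintro _ ⟨p, rfl⟩
    exact Ideal.mem_map_of_mem _ (Ideal.mem_sup_left p.2.mem_pow_idealOfVars)
  · intro y hy
    obtain ⟨x, hx, rfl⟩ :=
      (Ideal.mem_map_iff_of_surjective _ Ideal.Quotient.mk_surjective).1 hy
    obtain ⟨a, ha, b, hb, rfl⟩ := Submodule.mem_sup.1 hx
    refine ⟨⟨homogeneousComponent i a, homogeneousComponent_mem i a⟩, ?_⟩
    rw [toGradedPiece, LinearMap.comp_apply, Submodule.subtype_apply, AlgHom.toLinearMap_apply,
      Ideal.Quotient.mkₐ_eq_mk, Ideal.Quotient.eq]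
    have hdiff : homogeneousComponent i a - (a + b) = -((a - homogeneousComponent i a) + b) := by
      ring
    rw [hdiff]
    exact neg_mem (add_mem
      (Ideal.mem_sup_left (sub_homogeneousComponent_mem_pow_idealOfVars_succ ha))
      (Ideal.mem_sup_right hb))

variable {J} in
lemma ker_toGradedPiece (hJ : J.IsHomogeneous (homogeneousSubmodule σ K)) :
    LinearMap.ker (toGradedPiece J i) =
      (homogeneousPart J i).comap (homogeneousSubmodule σ K i).subtype := by
  ext ⟨p, hp⟩
  simp only [LinearMap.mem_ker, toGradedPiece, LinearMap.comp_apply, Submodule.subtype_apply,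
    AlgHom.toLinearMap_apply, Ideal.Quotient.mkₐ_eq_mk, Ideal.Quotient.eq_zero_iff_mem,
    Submodule.mem_comap, homogeneousPart, Submodule.mem_inf, Submodule.restrictScalars_mem]
  refine ⟨fun h => ⟨?_, hp⟩, fun h => Ideal.mem_sup_right h.1⟩
  obtain ⟨a, ha, b, hb, rfl⟩ := Submodule.mem_sup.1 h
  rw [← homogeneousComponent_eq_self hp, map_add,
    homogeneousComponent_eq_zero_of_mem_pow_idealOfVars ha i.lt_succ_self, zero_add]
  exact homogeneousComponent_mem_of_mem hJ hb i

end GradedPiece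

end MvPolynomial

lemma IsHomogeneousIdeal.isHomogeneous {k : Type*} [Field k] {e : ℕ}
    {J : Ideal (MvPolynomial (Fin e) k)} (hJ : IsHomogeneousIdeal k e J) :
    J.IsHomogeneous (homogeneousSubmodule (Fin e) k) := by
  obtain ⟨S, hS, rfl⟩ := hJ
  exact Ideal.homogeneous_span _ S hS

lemma hilb_add_finrank_homogeneousPart {k : Type*} [Field k] {e : ℕ}
    {J : Ideal (MvPolynomial (Fin e) k)} (hJ : J.IsHomogeneous (homogeneousSubmodule (Fin e) k))
    (i : ℕ) :
    hilb k e J i + Module.finrank k (homogeneousPart J i) =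
      Module.finrank k (homogeneousSubmodule (Fin e) k i) := by
  have hrank := LinearMap.finrank_range_add_finrank_ker (toGradedPiece J i)
  rwa [range_toGradedPiece, ker_toGradedPiece i hJ,
    (Submodule.comapSubtypeEquivOfLe (p := homogeneousPart J i) inf_le_right).finrank_eq]
    at hrank

lemma homogeneousPart_eq_bot_iff {k : Type*} [Field k] {e : ℕ}
    {J : Ideal (MvPolynomial (Fin e) k)} (hJ : J.IsHomogeneous (homogeneousSubmodule (Fin e) k))
    (i : ℕ) :
    homogeneousPart J i = ⊥ ↔
      hilb k e J i = Module.finrank k (homogeneousSubmodule (Fin e) k i) := by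
  have : Module.Finite k (homogeneousPart J i) := Submodule.finiteDimensional_of_le inf_le_right
  rw [← hilb_add_finrank_homogeneousPart hJ i, ← Submodule.finrank_eq_zero]
  omega

lemma hQ_eq_choose {e : ℕ} (he : 1 ≤ e) (i : ℕ) : hQ e i = (e + i - 1).choose i := by
  rw [hQ, Nat.choose_symm_add, Nat.sub_add_comm he]

lemma hQ_mono (e : ℕ) {i j : ℕ} (h : i ≤ j) : hQ e i ≤ hQ e j :=
  Nat.choose_le_choose _ (by omega)

lemma eq_three_of_hQ_le {e s : ℕ} (he : 3 ≤ e) (hs : 2 ≤ s)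
    (h : hQ e (s / 2 + 1) ≤ hQ e (s - (s / 2 + 1)) + e) : e = 3 ∧ s = 3 := by
  obtain ⟨a, rfl⟩ : ∃ a, e = a + 3 := ⟨e - 3, by omega⟩
  obtain ⟨u, hu⟩ : ∃ u, s / 2 + 1 = u + 2 := ⟨s / 2 - 1, by omega⟩
  have hQ_def : ∀ i, hQ (a + 3) i = (a + 2 + i).choose (a + 2) := fun i => rfl
  rw [hu, hQ_def, hQ_def] at h
  have hmono : (a + 2 + (s - (u + 2))).choose (a + 2) ≤ (a + u + 3).choose (a + 2) :=
    Nat.choose_le_choose _ (by omega)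
  have hpascal : (a + 2 + (u + 2)).choose (a + 2) =
      (a + u + 3).choose (a + 1) + (a + u + 3).choose (a + 2) := by
    rw [show a + 2 + (u + 2) = a + u + 3 + 1 by omega]
    exact Nat.choose_succ_succ' _ _
  have hnew : (a + u + 3).choose (a + 1) ≤ a + 3 := by omega
  have hlow : (a + 3).choose 2 ≤ (a + u + 3).choose (a + 1) := by
    rw [show a + 3 = a + 1 + 2 from rfl, ← Nat.choose_symm_add]
    exact Nat.choose_le_choose _ (by omega)
  have ha : a = 0 := by
    by_contra ha
    have hpascal2 : (a + 3).choose 2 = (a + 2) + (a + 2).choose 2 := by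
      rw [Nat.choose_succ_succ', Nat.choose_one_right]
    have hthree : (2 + 1).choose 2 ≤ (a + 2).choose 2 := Nat.choose_le_choose 2 (by omega)
    have : (2 + 1).choose 2 = 3 := rfl
    omega
  subst ha
  rw [Nat.choose_one_right] at hnew
  obtain rfl : u = 0 := by omega
  obtain rfl | rfl : s = 2 ∨ s = 3 := by omega
  · exact absurd h (by decide)
  · exact ⟨rfl, rfl⟩

theorem stmt9_general (k : Type*) [Field k] (e : ℕ) (he : 3 ≤ e)
    (J : Ideal (MvPolynomial (Fin e) k))
    (hhom : IsHomogeneousIdeal k e J)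
    (hq2 : J ≤ qIdeal k e ^ 2)
    -- `J` is a complete intersection: generated by a regular sequence of `e` elements
    (hci : ∃ L : List (MvPolynomial (Fin e) k), L.length = e ∧
      RingTheory.Sequence.IsRegular (MvPolynomial (Fin e) k) L ∧
      J = Ideal.span {x | x ∈ L})
    (s : ℕ)
    -- `Q/J` is compressed Gorenstein
    (hcomp : ∀ i : ℕ, hilb k e J i = min (hQ e i) (if i ≤ s then hQ e (s - i) else 0)) :
    e = 3 ∧ hilb k e J 0 = 1 ∧ hilb k e J 1 = 3 ∧ hilb k e J 2 = 3 ∧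
      hilb k e J 3 = 1 ∧ ∀ i : ℕ, 4 ≤ i → hilb k e J i = 0 := by
  classical
  obtain ⟨L, hLlen, -, hJL⟩ := hci
  rw [← List.coe_toFinset] at hJL
  have hJ := hhom.isHomogeneous
  have hfinrank (i : ℕ) : Module.finrank k (homogeneousSubmodule (Fin e) k i) = hQ e i := by
    rw [finrank_homogeneousSubmodule, Fintype.card_fin, hQ_eq_choose (by omega)]
  have hs : 2 ≤ s := by
    have h1 :=
      (homogeneousPart_eq_bot_iff hJ 1).1 (homogeneousPart_eq_bot_of_le_pow hq2 one_lt_two)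
    rw [hfinrank, hcomp] at h1
    by_contra! hs
    interval_cases s
    · simp [hQ] at h1
    · simp [hQ] at h1
      omega
  set t := s / 2 + 1
  have hJt : J ≤ qIdeal k e ^ t := by
    refine (le_pow_idealOfVars_iff hJ).2 fun d hd => (homogeneousPart_eq_bot_iff hJ d).2 ?_
    rw [hfinrank, hcomp, if_pos (by omega), min_eq_left (hQ_mono e (by omega))]
  have hkey : hQ e t ≤ hQ e (s - t) + e := by
    have hgens := (finrank_homogeneousPart_le_card hJL hJt).trans (List.toFinset_card_le L)
    have hhilb : hilb k e J t ≤ hQ e (s - t) := by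
      rw [hcomp, if_pos (by omega)]
      exact min_le_right _ _
    have := hilb_add_finrank_homogeneousPart hJ t
    rw [hfinrank] at this
    omega
  obtain ⟨rfl, rfl⟩ := eq_three_of_hQ_le he hs hkey
  refine ⟨rfl, ?_, ?_, ?_, ?_, fun i hi => ?_⟩
  all_goals rw [hcomp]
  · rfl
  · rfl
  · rfl
  · rfl
  · simp [if_neg (show ¬ i ≤ 3 by omega)]

/-- Let `Q` be the (power series, equivalently polynomial)
`k`-algebra in `e ≥ 3` variables and `J ⊆ q^2` a homogeneous `q`-primary
complete intersection ideal.  If `Q/J` is compressed (Gorenstein), then `e = 3`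
and the h-vector of `Q/J` is `(1,3,3,1)`. -/
theorem stmt9 (k : Type*) [Field k] (e : ℕ) (he : 3 ≤ e)
    (J : Ideal (MvPolynomial (Fin e) k))
    (hhom : IsHomogeneousIdeal k e J)
    (hp : J.IsPrimary) (hr : J.radical = qIdeal k e)
    (hq2 : J ≤ qIdeal k e ^ 2)
    -- `J` is a complete intersection: generated by a regular sequence of `e` elements
    (hci : ∃ L : List (MvPolynomial (Fin e) k), L.length = e ∧
      RingTheory.Sequence.IsRegular (MvPolynomial (Fin e) k) L ∧
      J = Ideal.span {x | x ∈ L})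
    (s : ℕ)
    -- `s` is the socle degree of `Q/J`
    (hsoc : ¬ qIdeal k e ^ s ≤ J ∧ qIdeal k e ^ (s + 1) ≤ J)
    -- `Q/J` is compressed Gorenstein
    (hcomp : ∀ i : ℕ, hilb k e J i = min (hQ e i) (if i ≤ s then hQ e (s - i) else 0)) :
    e = 3 ∧ hilb k e J 0 = 1 ∧ hilb k e J 1 = 3 ∧ hilb k e J 2 = 3 ∧
      hilb k e J 3 = 1 ∧ ∀ i : ℕ, 4 ≤ i → hilb k e J i = 0 :=
  stmt9_general k e he J hhom hq2 hci s hcomp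
end
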